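/- arXiv:2303.07411 — 2 statements merged into one kernel-verified Lean document; each statement's English description precedes it below -/
import Mathlib

section
/- Let u, v, p, q : ℝ⁴ → ℝ be smooth functions. (i) If p_t = J(u, p) − E(u) and p_z = J(v, p) − E(v) hold at every point, then J(F2, p) = E(F2) at every point. (ii) If in addition q_t = J(u, q) + J(Δv, p) − E(Δv) and q_z = J(v, q) + J(Δu, p) − E(Δu) hold at every point, then J(F2, q) + J(F1, p) = E(F1) at every point. Here F1 := (Δu)_t − (Δv)_z − J(u, Δu) + J(v, Δv) and F2 := v_t − u_z − J(u, v). In particular this system is compatible on solutions of RMHD, giving another Lax representation of RMHD. -/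
noncomputable section

/-- Partial derivative in `t` of a function of `(t, x, y, z)`. -/
def pt (f : ℝ × ℝ × ℝ × ℝ → ℝ) (P : ℝ × ℝ × ℝ × ℝ) : ℝ :=
  deriv (fun w => f (w, P.2.1, P.2.2.1, P.2.2.2)) P.1

/-- Partial derivative in `x` of a function of `(t, x, y, z)`. -/
def px (f : ℝ × ℝ × ℝ × ℝ → ℝ) (P : ℝ × ℝ × ℝ × ℝ) : ℝ :=
  deriv (fun w => f (P.1, w, P.2.2.1, P.2.2.2)) P.2.1

/-- Partial derivative in `y` of a function of `(t, x, y, z)`. -/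
def py (f : ℝ × ℝ × ℝ × ℝ → ℝ) (P : ℝ × ℝ × ℝ × ℝ) : ℝ :=
  deriv (fun w => f (P.1, P.2.1, w, P.2.2.2)) P.2.2.1

/-- Partial derivative in `z` of a function of `(t, x, y, z)`. -/
def pz (f : ℝ × ℝ × ℝ × ℝ → ℝ) (P : ℝ × ℝ × ℝ × ℝ) : ℝ :=
  deriv (fun w => f (P.1, P.2.1, P.2.2.1, w)) P.2.2.2

/-- Jacobi bracket `J(f, g) = f_x g_y - f_y g_x`. -/
def J (f g : ℝ × ℝ × ℝ × ℝ → ℝ) : ℝ × ℝ × ℝ × ℝ → ℝ :=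
  fun P => px f P * py g P - py f P * px g P

/-- Planar Laplacian `Δf = f_xx + f_yy`. -/
def lap (f : ℝ × ℝ × ℝ × ℝ → ℝ) : ℝ × ℝ × ℝ × ℝ → ℝ :=
  fun P => px (px f) P + py (py f) P

/-- The operator `E(f) = x f_x + y f_y - 2 f`. -/
def Eop (f : ℝ × ℝ × ℝ × ℝ → ℝ) : ℝ × ℝ × ℝ × ℝ → ℝ :=
  fun P => P.2.1 * px f P + P.2.2.1 * py f P - 2 * f P

/-- `F1 = (Δu)_t - (Δv)_z - J(u, Δu) + J(v, Δv)`. -/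
def F1 (u v : ℝ × ℝ × ℝ × ℝ → ℝ) : ℝ × ℝ × ℝ × ℝ → ℝ :=
  fun P => pt (lap u) P - pz (lap v) P - J u (lap u) P + J v (lap v) P

/-- `F2 = v_t - u_z - J(u, v)`. -/
def F2 (u v : ℝ × ℝ × ℝ × ℝ → ℝ) : ℝ × ℝ × ℝ × ℝ → ℝ :=
  fun P => pt v P - pz u P - J u v P


namespace RM

abbrev V := ℝ × ℝ × ℝ × ℝ

def D (a : V) (f : V → ℝ) : V → ℝ := fun P => fderiv ℝ f P a

lemma contDiff_D (a : V) (f : V → ℝ) (hf : ContDiff ℝ (⊤ : ℕ∞) f) : ContDiff ℝ (⊤ : ℕ∞) (D a f) :=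
  (hf.fderiv_right (by simp)).clm_apply contDiff_const

lemma D_comm (a b : V) (f : V → ℝ) (hf : ContDiff ℝ (⊤ : ℕ∞) f) (P : V) :
    D a (D b f) P = D b (D a f) P := by
  have h2 : DifferentiableAt ℝ (fderiv ℝ f) P := ((hf.fderiv_right (m := (⊤ : ℕ∞)) (by simp)).differentiable (by simp)) P
  have key : ∀ c : V, fderiv ℝ (fun Q => fderiv ℝ f Q c) P = (fderiv ℝ (fderiv ℝ f) P).flip c := by
    intro c
    rw [fderiv_clm_apply h2 (differentiableAt_const c)]
    simp
  have sym := second_derivative_symmetric (f' := fderiv ℝ f) (f'' := fderiv ℝ (fderiv ℝ f) P)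
      (fun y => ((hf.differentiable (by simp)) y).hasFDerivAt) h2.hasFDerivAt a b
  show fderiv ℝ (fun Q => fderiv ℝ f Q b) P a = fderiv ℝ (fun Q => fderiv ℝ f Q a) P b
  rw [key b, key a]
  simpa using sym

lemma hasDerivAt_slice_t (f : V → ℝ) (w a b c : ℝ) (hf : DifferentiableAt ℝ f (w, a, b, c)) :
    HasDerivAt (fun s => f (s, a, b, c)) (fderiv ℝ f (w, a, b, c) (1,0,0,0)) w := by
  have h := hf.hasFDerivAt.comp_hasDerivAt w ((hasDerivAt_id w).prodMk ((hasDerivAt_const w a).prodMk ((hasDerivAt_const w b).prodMk (hasDerivAt_const w c))))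
  exact h

lemma dslice_t (f : V → ℝ) (hf : ContDiff ℝ (⊤ : ℕ∞) f) (P : V) :
    DifferentiableAt ℝ (fun w => f (w, P.2.1, P.2.2.1, P.2.2.2)) P.1 := by
  have := hasDerivAt_slice_t f P.1 P.2.1 P.2.2.1 P.2.2.2 (hf.differentiable (by simp) _)
  exact this.differentiableAt

lemma pt_eq (f : V → ℝ) (P : V) (hf : DifferentiableAt ℝ f P) : pt f P = D (1,0,0,0) f P :=
  (hasDerivAt_slice_t f P.1 P.2.1 P.2.2.1 P.2.2.2 hf).deriv

lemma pt_eqF (f : V → ℝ) (hf : ContDiff ℝ (⊤ : ℕ∞) f) : pt f = D (1,0,0,0) f :=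
  funext fun P => pt_eq f P (hf.differentiable (by simp) P)

lemma contDiff_pt (f : V → ℝ) (hf : ContDiff ℝ (⊤ : ℕ∞) f) : ContDiff ℝ (⊤ : ℕ∞) (pt f) := by
  rw [pt_eqF f hf]; exact contDiff_D _ _ hf

lemma pt_add (f g : V → ℝ) (hf : ContDiff ℝ (⊤ : ℕ∞) f) (hg : ContDiff ℝ (⊤ : ℕ∞) g) (P : V) :
    pt (fun Q => f Q + g Q) P = pt f P + pt g P := by
  simp only [pt]
  rw [deriv_fun_add (dslice_t f hf P) (dslice_t g hg P)]

lemma pt_sub (f g : V → ℝ) (hf : ContDiff ℝ (⊤ : ℕ∞) f) (hg : ContDiff ℝ (⊤ : ℕ∞) g) (P : V) :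
    pt (fun Q => f Q - g Q) P = pt f P - pt g P := by
  simp only [pt]
  rw [deriv_fun_sub (dslice_t f hf P) (dslice_t g hg P)]

lemma pt_mul (f g : V → ℝ) (hf : ContDiff ℝ (⊤ : ℕ∞) f) (hg : ContDiff ℝ (⊤ : ℕ∞) g) (P : V) :
    pt (fun Q => f Q * g Q) P = pt f P * g P + f P * pt g P := by
  simp only [pt]
  rw [deriv_fun_mul (dslice_t f hf P) (dslice_t g hg P)]

lemma pt_cmul (c : ℝ) (g : V → ℝ) (hg : ContDiff ℝ (⊤ : ℕ∞) g) (P : V) :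
    pt (fun Q => c * g Q) P = c * pt g P := by
  simp only [pt]
  rw [deriv_const_mul c (dslice_t g hg P)]


lemma hasDerivAt_slice_x (f : V → ℝ) (w a b c : ℝ) (hf : DifferentiableAt ℝ f (a, w, b, c)) :
    HasDerivAt (fun s => f (a, s, b, c)) (fderiv ℝ f (a, w, b, c) (0,1,0,0)) w := by
  have h := hf.hasFDerivAt.comp_hasDerivAt w ((hasDerivAt_const w a).prodMk ((hasDerivAt_id w).prodMk ((hasDerivAt_const w b).prodMk (hasDerivAt_const w c))))
  exact h

lemma dslice_x (f : V → ℝ) (hf : ContDiff ℝ (⊤ : ℕ∞) f) (P : V) :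
    DifferentiableAt ℝ (fun w => f (P.1, w, P.2.2.1, P.2.2.2)) P.2.1 := by
  have := hasDerivAt_slice_x f P.2.1 P.1 P.2.2.1 P.2.2.2 (hf.differentiable (by simp) _)
  exact this.differentiableAt

lemma px_eq (f : V → ℝ) (P : V) (hf : DifferentiableAt ℝ f P) : px f P = D (0,1,0,0) f P :=
  (hasDerivAt_slice_x f P.2.1 P.1 P.2.2.1 P.2.2.2 hf).deriv

lemma px_eqF (f : V → ℝ) (hf : ContDiff ℝ (⊤ : ℕ∞) f) : px f = D (0,1,0,0) f :=
  funext fun P => px_eq f P (hf.differentiable (by simp) P)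

lemma contDiff_px (f : V → ℝ) (hf : ContDiff ℝ (⊤ : ℕ∞) f) : ContDiff ℝ (⊤ : ℕ∞) (px f) := by
  rw [px_eqF f hf]; exact contDiff_D _ _ hf

lemma px_add (f g : V → ℝ) (hf : ContDiff ℝ (⊤ : ℕ∞) f) (hg : ContDiff ℝ (⊤ : ℕ∞) g) (P : V) :
    px (fun Q => f Q + g Q) P = px f P + px g P := by
  simp only [px]
  rw [deriv_fun_add (dslice_x f hf P) (dslice_x g hg P)]

lemma px_sub (f g : V → ℝ) (hf : ContDiff ℝ (⊤ : ℕ∞) f) (hg : ContDiff ℝ (⊤ : ℕ∞) g) (P : V) :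
    px (fun Q => f Q - g Q) P = px f P - px g P := by
  simp only [px]
  rw [deriv_fun_sub (dslice_x f hf P) (dslice_x g hg P)]

lemma px_mul (f g : V → ℝ) (hf : ContDiff ℝ (⊤ : ℕ∞) f) (hg : ContDiff ℝ (⊤ : ℕ∞) g) (P : V) :
    px (fun Q => f Q * g Q) P = px f P * g P + f P * px g P := by
  simp only [px]
  rw [deriv_fun_mul (dslice_x f hf P) (dslice_x g hg P)]

lemma px_cmul (c : ℝ) (g : V → ℝ) (hg : ContDiff ℝ (⊤ : ℕ∞) g) (P : V) :
    px (fun Q => c * g Q) P = c * px g P := by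
  simp only [px]
  rw [deriv_const_mul c (dslice_x g hg P)]


lemma hasDerivAt_slice_y (f : V → ℝ) (w a b c : ℝ) (hf : DifferentiableAt ℝ f (a, b, w, c)) :
    HasDerivAt (fun s => f (a, b, s, c)) (fderiv ℝ f (a, b, w, c) (0,0,1,0)) w := by
  have h := hf.hasFDerivAt.comp_hasDerivAt w ((hasDerivAt_const w a).prodMk ((hasDerivAt_const w b).prodMk ((hasDerivAt_id w).prodMk (hasDerivAt_const w c))))
  exact h

lemma dslice_y (f : V → ℝ) (hf : ContDiff ℝ (⊤ : ℕ∞) f) (P : V) :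
    DifferentiableAt ℝ (fun w => f (P.1, P.2.1, w, P.2.2.2)) P.2.2.1 := by
  have := hasDerivAt_slice_y f P.2.2.1 P.1 P.2.1 P.2.2.2 (hf.differentiable (by simp) _)
  exact this.differentiableAt

lemma py_eq (f : V → ℝ) (P : V) (hf : DifferentiableAt ℝ f P) : py f P = D (0,0,1,0) f P :=
  (hasDerivAt_slice_y f P.2.2.1 P.1 P.2.1 P.2.2.2 hf).deriv

lemma py_eqF (f : V → ℝ) (hf : ContDiff ℝ (⊤ : ℕ∞) f) : py f = D (0,0,1,0) f :=
  funext fun P => py_eq f P (hf.differentiable (by simp) P)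

lemma contDiff_py (f : V → ℝ) (hf : ContDiff ℝ (⊤ : ℕ∞) f) : ContDiff ℝ (⊤ : ℕ∞) (py f) := by
  rw [py_eqF f hf]; exact contDiff_D _ _ hf

lemma py_add (f g : V → ℝ) (hf : ContDiff ℝ (⊤ : ℕ∞) f) (hg : ContDiff ℝ (⊤ : ℕ∞) g) (P : V) :
    py (fun Q => f Q + g Q) P = py f P + py g P := by
  simp only [py]
  rw [deriv_fun_add (dslice_y f hf P) (dslice_y g hg P)]

lemma py_sub (f g : V → ℝ) (hf : ContDiff ℝ (⊤ : ℕ∞) f) (hg : ContDiff ℝ (⊤ : ℕ∞) g) (P : V) :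
    py (fun Q => f Q - g Q) P = py f P - py g P := by
  simp only [py]
  rw [deriv_fun_sub (dslice_y f hf P) (dslice_y g hg P)]

lemma py_mul (f g : V → ℝ) (hf : ContDiff ℝ (⊤ : ℕ∞) f) (hg : ContDiff ℝ (⊤ : ℕ∞) g) (P : V) :
    py (fun Q => f Q * g Q) P = py f P * g P + f P * py g P := by
  simp only [py]
  rw [deriv_fun_mul (dslice_y f hf P) (dslice_y g hg P)]

lemma py_cmul (c : ℝ) (g : V → ℝ) (hg : ContDiff ℝ (⊤ : ℕ∞) g) (P : V) :
    py (fun Q => c * g Q) P = c * py g P := by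
  simp only [py]
  rw [deriv_const_mul c (dslice_y g hg P)]


lemma hasDerivAt_slice_z (f : V → ℝ) (w a b c : ℝ) (hf : DifferentiableAt ℝ f (a, b, c, w)) :
    HasDerivAt (fun s => f (a, b, c, s)) (fderiv ℝ f (a, b, c, w) (0,0,0,1)) w := by
  have h := hf.hasFDerivAt.comp_hasDerivAt w ((hasDerivAt_const w a).prodMk ((hasDerivAt_const w b).prodMk ((hasDerivAt_const w c).prodMk (hasDerivAt_id w))))
  exact h

lemma dslice_z (f : V → ℝ) (hf : ContDiff ℝ (⊤ : ℕ∞) f) (P : V) :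
    DifferentiableAt ℝ (fun w => f (P.1, P.2.1, P.2.2.1, w)) P.2.2.2 := by
  have := hasDerivAt_slice_z f P.2.2.2 P.1 P.2.1 P.2.2.1 (hf.differentiable (by simp) _)
  exact this.differentiableAt

lemma pz_eq (f : V → ℝ) (P : V) (hf : DifferentiableAt ℝ f P) : pz f P = D (0,0,0,1) f P :=
  (hasDerivAt_slice_z f P.2.2.2 P.1 P.2.1 P.2.2.1 hf).deriv

lemma pz_eqF (f : V → ℝ) (hf : ContDiff ℝ (⊤ : ℕ∞) f) : pz f = D (0,0,0,1) f :=
  funext fun P => pz_eq f P (hf.differentiable (by simp) P)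

lemma contDiff_pz (f : V → ℝ) (hf : ContDiff ℝ (⊤ : ℕ∞) f) : ContDiff ℝ (⊤ : ℕ∞) (pz f) := by
  rw [pz_eqF f hf]; exact contDiff_D _ _ hf

lemma pz_add (f g : V → ℝ) (hf : ContDiff ℝ (⊤ : ℕ∞) f) (hg : ContDiff ℝ (⊤ : ℕ∞) g) (P : V) :
    pz (fun Q => f Q + g Q) P = pz f P + pz g P := by
  simp only [pz]
  rw [deriv_fun_add (dslice_z f hf P) (dslice_z g hg P)]

lemma pz_sub (f g : V → ℝ) (hf : ContDiff ℝ (⊤ : ℕ∞) f) (hg : ContDiff ℝ (⊤ : ℕ∞) g) (P : V) :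
    pz (fun Q => f Q - g Q) P = pz f P - pz g P := by
  simp only [pz]
  rw [deriv_fun_sub (dslice_z f hf P) (dslice_z g hg P)]

lemma pz_mul (f g : V → ℝ) (hf : ContDiff ℝ (⊤ : ℕ∞) f) (hg : ContDiff ℝ (⊤ : ℕ∞) g) (P : V) :
    pz (fun Q => f Q * g Q) P = pz f P * g P + f P * pz g P := by
  simp only [pz]
  rw [deriv_fun_mul (dslice_z f hf P) (dslice_z g hg P)]

lemma pz_cmul (c : ℝ) (g : V → ℝ) (hg : ContDiff ℝ (⊤ : ℕ∞) g) (P : V) :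
    pz (fun Q => c * g Q) P = c * pz g P := by
  simp only [pz]
  rw [deriv_const_mul c (dslice_z g hg P)]


lemma ptx_comm (f : V → ℝ) (hf : ContDiff ℝ (⊤ : ℕ∞) f) (P : V) :
    pt (px f) P = px (pt f) P := by
  rw [px_eqF f hf, pt_eqF f hf,
      pt_eq (D (0,1,0,0) f) P (((contDiff_D (0,1,0,0) f hf).differentiable (by simp)) P),
      px_eq (D (1,0,0,0) f) P (((contDiff_D (1,0,0,0) f hf).differentiable (by simp)) P)]
  exact D_comm (1,0,0,0) (0,1,0,0) f hf P


lemma pty_comm (f : V → ℝ) (hf : ContDiff ℝ (⊤ : ℕ∞) f) (P : V) :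
    pt (py f) P = py (pt f) P := by
  rw [py_eqF f hf, pt_eqF f hf,
      pt_eq (D (0,0,1,0) f) P (((contDiff_D (0,0,1,0) f hf).differentiable (by simp)) P),
      py_eq (D (1,0,0,0) f) P (((contDiff_D (1,0,0,0) f hf).differentiable (by simp)) P)]
  exact D_comm (1,0,0,0) (0,0,1,0) f hf P


lemma ptz_comm (f : V → ℝ) (hf : ContDiff ℝ (⊤ : ℕ∞) f) (P : V) :
    pt (pz f) P = pz (pt f) P := by
  rw [pz_eqF f hf, pt_eqF f hf,
      pt_eq (D (0,0,0,1) f) P (((contDiff_D (0,0,0,1) f hf).differentiable (by simp)) P),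
      pz_eq (D (1,0,0,0) f) P (((contDiff_D (1,0,0,0) f hf).differentiable (by simp)) P)]
  exact D_comm (1,0,0,0) (0,0,0,1) f hf P


lemma pxy_comm (f : V → ℝ) (hf : ContDiff ℝ (⊤ : ℕ∞) f) (P : V) :
    px (py f) P = py (px f) P := by
  rw [py_eqF f hf, px_eqF f hf,
      px_eq (D (0,0,1,0) f) P (((contDiff_D (0,0,1,0) f hf).differentiable (by simp)) P),
      py_eq (D (0,1,0,0) f) P (((contDiff_D (0,1,0,0) f hf).differentiable (by simp)) P)]
  exact D_comm (0,1,0,0) (0,0,1,0) f hf P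


lemma pxz_comm (f : V → ℝ) (hf : ContDiff ℝ (⊤ : ℕ∞) f) (P : V) :
    px (pz f) P = pz (px f) P := by
  rw [pz_eqF f hf, px_eqF f hf,
      px_eq (D (0,0,0,1) f) P (((contDiff_D (0,0,0,1) f hf).differentiable (by simp)) P),
      pz_eq (D (0,1,0,0) f) P (((contDiff_D (0,1,0,0) f hf).differentiable (by simp)) P)]
  exact D_comm (0,1,0,0) (0,0,0,1) f hf P


lemma pyz_comm (f : V → ℝ) (hf : ContDiff ℝ (⊤ : ℕ∞) f) (P : V) :
    py (pz f) P = pz (py f) P := by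
  rw [pz_eqF f hf, py_eqF f hf,
      py_eq (D (0,0,0,1) f) P (((contDiff_D (0,0,0,1) f hf).differentiable (by simp)) P),
      pz_eq (D (0,0,1,0) f) P (((contDiff_D (0,0,1,0) f hf).differentiable (by simp)) P)]
  exact D_comm (0,0,1,0) (0,0,0,1) f hf P


-- coordinate-times-function rules
lemma px_xc_mul (g : V → ℝ) (hg : ContDiff ℝ (⊤ : ℕ∞) g) (P : V) :
    px (fun Q => Q.2.1 * g Q) P = g P + P.2.1 * px g P := by
  have e : px (fun Q => Q.2.1 * g Q) P
      = deriv (fun w => w * g (P.1, w, P.2.2.1, P.2.2.2)) P.2.1 := rfl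
  rw [e, deriv_fun_mul differentiableAt_fun_id (dslice_x g hg P), deriv_id'']
  show 1 * g P + P.2.1 * px g P = g P + P.2.1 * px g P
  ring

lemma py_yc_mul (g : V → ℝ) (hg : ContDiff ℝ (⊤ : ℕ∞) g) (P : V) :
    py (fun Q => Q.2.2.1 * g Q) P = g P + P.2.2.1 * py g P := by
  have e : py (fun Q => Q.2.2.1 * g Q) P
      = deriv (fun w => w * g (P.1, P.2.1, w, P.2.2.2)) P.2.2.1 := rfl
  rw [e, deriv_fun_mul differentiableAt_fun_id (dslice_y g hg P), deriv_id'']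
  show 1 * g P + P.2.2.1 * py g P = g P + P.2.2.1 * py g P
  ring

lemma px_yc_mul (g : V → ℝ) (hg : ContDiff ℝ (⊤ : ℕ∞) g) (P : V) :
    px (fun Q => Q.2.2.1 * g Q) P = P.2.2.1 * px g P := by
  have e : px (fun Q => Q.2.2.1 * g Q) P
      = deriv (fun w => P.2.2.1 * g (P.1, w, P.2.2.1, P.2.2.2)) P.2.1 := rfl
  rw [e, deriv_const_mul _ (dslice_x g hg P)]
  rfl

lemma py_xc_mul (g : V → ℝ) (hg : ContDiff ℝ (⊤ : ℕ∞) g) (P : V) :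
    py (fun Q => Q.2.1 * g Q) P = P.2.1 * py g P := by
  have e : py (fun Q => Q.2.1 * g Q) P
      = deriv (fun w => P.2.1 * g (P.1, P.2.1, w, P.2.2.2)) P.2.2.1 := rfl
  rw [e, deriv_const_mul _ (dslice_y g hg P)]
  rfl

lemma pt_xc_mul (g : V → ℝ) (hg : ContDiff ℝ (⊤ : ℕ∞) g) (P : V) :
    pt (fun Q => Q.2.1 * g Q) P = P.2.1 * pt g P := by
  have e : pt (fun Q => Q.2.1 * g Q) P
      = deriv (fun w => P.2.1 * g (w, P.2.1, P.2.2.1, P.2.2.2)) P.1 := rfl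
  rw [e, deriv_const_mul _ (dslice_t g hg P)]
  rfl

lemma pt_yc_mul (g : V → ℝ) (hg : ContDiff ℝ (⊤ : ℕ∞) g) (P : V) :
    pt (fun Q => Q.2.2.1 * g Q) P = P.2.2.1 * pt g P := by
  have e : pt (fun Q => Q.2.2.1 * g Q) P
      = deriv (fun w => P.2.2.1 * g (w, P.2.1, P.2.2.1, P.2.2.2)) P.1 := rfl
  rw [e, deriv_const_mul _ (dslice_t g hg P)]
  rfl

lemma pz_xc_mul (g : V → ℝ) (hg : ContDiff ℝ (⊤ : ℕ∞) g) (P : V) :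
    pz (fun Q => Q.2.1 * g Q) P = P.2.1 * pz g P := by
  have e : pz (fun Q => Q.2.1 * g Q) P
      = deriv (fun w => P.2.1 * g (P.1, P.2.1, P.2.2.1, w)) P.2.2.2 := rfl
  rw [e, deriv_const_mul _ (dslice_z g hg P)]
  rfl

lemma pz_yc_mul (g : V → ℝ) (hg : ContDiff ℝ (⊤ : ℕ∞) g) (P : V) :
    pz (fun Q => Q.2.2.1 * g Q) P = P.2.2.1 * pz g P := by
  have e : pz (fun Q => Q.2.2.1 * g Q) P
      = deriv (fun w => P.2.2.1 * g (P.1, P.2.1, P.2.2.1, w)) P.2.2.2 := rfl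
  rw [e, deriv_const_mul _ (dslice_z g hg P)]
  rfl

-- smoothness of composite operators
lemma contDiff_coordX : ContDiff ℝ (⊤ : ℕ∞) (fun Q : V => Q.2.1) :=
  contDiff_fst.comp contDiff_snd

lemma contDiff_coordY : ContDiff ℝ (⊤ : ℕ∞) (fun Q : V => Q.2.2.1) :=
  contDiff_fst.comp (contDiff_snd.comp contDiff_snd)

lemma contDiff_J (f g : V → ℝ) (hf : ContDiff ℝ (⊤ : ℕ∞) f) (hg : ContDiff ℝ (⊤ : ℕ∞) g) :
    ContDiff ℝ (⊤ : ℕ∞) (J f g) := by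
  unfold J
  exact ((contDiff_px f hf).mul (contDiff_py g hg)).sub
    ((contDiff_py f hf).mul (contDiff_px g hg))

lemma contDiff_Eop (f : V → ℝ) (hf : ContDiff ℝ (⊤ : ℕ∞) f) : ContDiff ℝ (⊤ : ℕ∞) (Eop f) := by
  unfold Eop
  exact ((contDiff_coordX.mul (contDiff_px f hf)).add
    (contDiff_coordY.mul (contDiff_py f hf))).sub (contDiff_const.mul hf)

lemma contDiff_lap (f : V → ℝ) (hf : ContDiff ℝ (⊤ : ℕ∞) f) : ContDiff ℝ (⊤ : ℕ∞) (lap f) := by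
  unfold lap
  exact (contDiff_px (px f) (contDiff_px f hf)).add (contDiff_py (py f) (contDiff_py f hf))

lemma pz_J (f g : V → ℝ) (hf : ContDiff ℝ (⊤ : ℕ∞) f) (hg : ContDiff ℝ (⊤ : ℕ∞) g) (P : V) :
    pz (J f g) P = J (pz f) g P + J f (pz g) P := by
  have e : J f g = fun Q => px f Q * py g Q - py f Q * px g Q := rfl
  rw [e, pz_sub (fun Q => px f Q * py g Q) (fun Q => py f Q * px g Q)
      ((contDiff_px f hf).mul (contDiff_py g hg)) ((contDiff_py f hf).mul (contDiff_px g hg)) P,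
    pz_mul (px f) (py g) (contDiff_px f hf) (contDiff_py g hg) P,
    pz_mul (py f) (px g) (contDiff_py f hf) (contDiff_px g hg) P,
    ← pxz_comm f hf P, ← pyz_comm f hf P, ← pxz_comm g hg P, ← pyz_comm g hg P]
  simp only [J]
  ring

lemma pt_J (f g : V → ℝ) (hf : ContDiff ℝ (⊤ : ℕ∞) f) (hg : ContDiff ℝ (⊤ : ℕ∞) g) (P : V) :
    pt (J f g) P = J (pt f) g P + J f (pt g) P := by
  have e : J f g = fun Q => px f Q * py g Q - py f Q * px g Q := rfl
  rw [e, pt_sub (fun Q => px f Q * py g Q) (fun Q => py f Q * px g Q)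
      ((contDiff_px f hf).mul (contDiff_py g hg)) ((contDiff_py f hf).mul (contDiff_px g hg)) P,
    pt_mul (px f) (py g) (contDiff_px f hf) (contDiff_py g hg) P,
    pt_mul (py f) (px g) (contDiff_py f hf) (contDiff_px g hg) P,
    ptx_comm f hf P, pty_comm f hf P, ptx_comm g hg P, pty_comm g hg P]
  simp only [J]
  ring

lemma pz_Eop (f : V → ℝ) (hf : ContDiff ℝ (⊤ : ℕ∞) f) (P : V) :
    pz (Eop f) P = Eop (pz f) P := by
  have e : Eop f = fun Q => Q.2.1 * px f Q + Q.2.2.1 * py f Q - 2 * f Q := rfl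
  rw [e, pz_sub (fun Q => Q.2.1 * px f Q + Q.2.2.1 * py f Q) (fun Q => 2 * f Q)
      ((contDiff_coordX.mul (contDiff_px f hf)).add (contDiff_coordY.mul (contDiff_py f hf)))
      (contDiff_const.mul hf) P,
    pz_add (fun Q => Q.2.1 * px f Q) (fun Q => Q.2.2.1 * py f Q)
      (contDiff_coordX.mul (contDiff_px f hf)) (contDiff_coordY.mul (contDiff_py f hf)) P,
    pz_xc_mul (px f) (contDiff_px f hf) P, pz_yc_mul (py f) (contDiff_py f hf) P,
    pz_cmul 2 f hf P, ← pxz_comm f hf P, ← pyz_comm f hf P]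
  rfl

lemma pt_Eop (f : V → ℝ) (hf : ContDiff ℝ (⊤ : ℕ∞) f) (P : V) :
    pt (Eop f) P = Eop (pt f) P := by
  have e : Eop f = fun Q => Q.2.1 * px f Q + Q.2.2.1 * py f Q - 2 * f Q := rfl
  rw [e, pt_sub (fun Q => Q.2.1 * px f Q + Q.2.2.1 * py f Q) (fun Q => 2 * f Q)
      ((contDiff_coordX.mul (contDiff_px f hf)).add (contDiff_coordY.mul (contDiff_py f hf)))
      (contDiff_const.mul hf) P,
    pt_add (fun Q => Q.2.1 * px f Q) (fun Q => Q.2.2.1 * py f Q)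
      (contDiff_coordX.mul (contDiff_px f hf)) (contDiff_coordY.mul (contDiff_py f hf)) P,
    pt_xc_mul (px f) (contDiff_px f hf) P, pt_yc_mul (py f) (contDiff_py f hf) P,
    pt_cmul 2 f hf P, ptx_comm f hf P, pty_comm f hf P]
  rfl

lemma px_J (f g : V → ℝ) (hf : ContDiff ℝ (⊤ : ℕ∞) f) (hg : ContDiff ℝ (⊤ : ℕ∞) g) (P : V) :
    px (J f g) P = px (px f) P * py g P + px f P * px (py g) P
      - px (py f) P * px g P - py f P * px (px g) P := by
  have e : J f g = fun Q => px f Q * py g Q - py f Q * px g Q := rfl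
  rw [e, px_sub (fun Q => px f Q * py g Q) (fun Q => py f Q * px g Q)
      ((contDiff_px f hf).mul (contDiff_py g hg)) ((contDiff_py f hf).mul (contDiff_px g hg)) P,
    px_mul (px f) (py g) (contDiff_px f hf) (contDiff_py g hg) P,
    px_mul (py f) (px g) (contDiff_py f hf) (contDiff_px g hg) P]
  ring

lemma py_J (f g : V → ℝ) (hf : ContDiff ℝ (⊤ : ℕ∞) f) (hg : ContDiff ℝ (⊤ : ℕ∞) g) (P : V) :
    py (J f g) P = px (py f) P * py g P + px f P * py (py g) P
      - py (py f) P * px g P - py f P * px (py g) P := by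
  have e : J f g = fun Q => px f Q * py g Q - py f Q * px g Q := rfl
  rw [e, py_sub (fun Q => px f Q * py g Q) (fun Q => py f Q * px g Q)
      ((contDiff_px f hf).mul (contDiff_py g hg)) ((contDiff_py f hf).mul (contDiff_px g hg)) P,
    py_mul (px f) (py g) (contDiff_px f hf) (contDiff_py g hg) P,
    py_mul (py f) (px g) (contDiff_py f hf) (contDiff_px g hg) P,
    ← pxy_comm f hf P, ← pxy_comm g hg P]
  ring

lemma px_Eop (f : V → ℝ) (hf : ContDiff ℝ (⊤ : ℕ∞) f) (P : V) :
    px (Eop f) P = px f P + P.2.1 * px (px f) P + P.2.2.1 * px (py f) P - 2 * px f P := by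
  have e : Eop f = fun Q => Q.2.1 * px f Q + Q.2.2.1 * py f Q - 2 * f Q := rfl
  rw [e, px_sub (fun Q => Q.2.1 * px f Q + Q.2.2.1 * py f Q) (fun Q => 2 * f Q)
      ((contDiff_coordX.mul (contDiff_px f hf)).add (contDiff_coordY.mul (contDiff_py f hf)))
      (contDiff_const.mul hf) P,
    px_add (fun Q => Q.2.1 * px f Q) (fun Q => Q.2.2.1 * py f Q)
      (contDiff_coordX.mul (contDiff_px f hf)) (contDiff_coordY.mul (contDiff_py f hf)) P,
    px_xc_mul (px f) (contDiff_px f hf) P, px_yc_mul (py f) (contDiff_py f hf) P,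
    px_cmul 2 f hf P]

lemma py_Eop (f : V → ℝ) (hf : ContDiff ℝ (⊤ : ℕ∞) f) (P : V) :
    py (Eop f) P = py f P + P.2.1 * px (py f) P + P.2.2.1 * py (py f) P - 2 * py f P := by
  have e : Eop f = fun Q => Q.2.1 * px f Q + Q.2.2.1 * py f Q - 2 * f Q := rfl
  rw [e, py_sub (fun Q => Q.2.1 * px f Q + Q.2.2.1 * py f Q) (fun Q => 2 * f Q)
      ((contDiff_coordX.mul (contDiff_px f hf)).add (contDiff_coordY.mul (contDiff_py f hf)))
      (contDiff_const.mul hf) P,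
    py_add (fun Q => Q.2.1 * px f Q) (fun Q => Q.2.2.1 * py f Q)
      (contDiff_coordX.mul (contDiff_px f hf)) (contDiff_coordY.mul (contDiff_py f hf)) P,
    py_xc_mul (px f) (contDiff_px f hf) P, py_yc_mul (py f) (contDiff_py f hf) P,
    py_cmul 2 f hf P, ← pxy_comm f hf P]
  ring

lemma J_J (f g h : V → ℝ) (hf : ContDiff ℝ (⊤ : ℕ∞) f) (hg : ContDiff ℝ (⊤ : ℕ∞) g) (hh : ContDiff ℝ (⊤ : ℕ∞) h)
    (P : V) : J f (J g h) P - J g (J f h) P = J (J f g) h P := by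
  have eL : ∀ a b : V → ℝ, J a b P = px a P * py b P - py a P * px b P := fun a b => rfl
  rw [eL f (J g h), eL g (J f h), eL (J f g) h,
    px_J g h hg hh P, py_J g h hg hh P, px_J f h hf hh P, py_J f h hf hh P,
    px_J f g hf hg P, py_J f g hf hg P]
  ring

lemma Eop_J (f g : V → ℝ) (hf : ContDiff ℝ (⊤ : ℕ∞) f) (hg : ContDiff ℝ (⊤ : ℕ∞) g) (P : V) :
    Eop (J f g) P = J (Eop f) g P + J f (Eop g) P := by
  have eL : ∀ a b : V → ℝ, J a b P = px a P * py b P - py a P * px b P := fun a b => rfl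
  have eE : ∀ a : V → ℝ, Eop a P = P.2.1 * px a P + P.2.2.1 * py a P - 2 * a P := fun a => rfl
  rw [eE (J f g), eL (Eop f) g, eL f (Eop g),
    px_J f g hf hg P, py_J f g hf hg P, px_Eop f hf P, py_Eop f hf P,
    px_Eop g hg P, py_Eop g hg P, eL f g]
  ring

lemma J_sub_right (f g h : V → ℝ) (hg : ContDiff ℝ (⊤ : ℕ∞) g) (hh : ContDiff ℝ (⊤ : ℕ∞) h) (P : V) :
    J f (fun Q => g Q - h Q) P = J f g P - J f h P := by
  simp only [J]
  rw [px_sub g h hg hh P, py_sub g h hg hh P]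
  ring

lemma J_add_right (f g h : V → ℝ) (hg : ContDiff ℝ (⊤ : ℕ∞) g) (hh : ContDiff ℝ (⊤ : ℕ∞) h) (P : V) :
    J f (fun Q => g Q + h Q) P = J f g P + J f h P := by
  simp only [J]
  rw [px_add g h hg hh P, py_add g h hg hh P]
  ring

lemma J_sub_left (f g h : V → ℝ) (hf : ContDiff ℝ (⊤ : ℕ∞) f) (hg : ContDiff ℝ (⊤ : ℕ∞) g) (P : V) :
    J (fun Q => f Q - g Q) h P = J f h P - J g h P := by
  simp only [J]
  rw [px_sub f g hf hg P, py_sub f g hf hg P]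
  ring

lemma J_add_left (f g h : V → ℝ) (hf : ContDiff ℝ (⊤ : ℕ∞) f) (hg : ContDiff ℝ (⊤ : ℕ∞) g) (P : V) :
    J (fun Q => f Q + g Q) h P = J f h P + J g h P := by
  simp only [J]
  rw [px_add f g hf hg P, py_add f g hf hg P]
  ring

lemma Eop_sub (f g : V → ℝ) (hf : ContDiff ℝ (⊤ : ℕ∞) f) (hg : ContDiff ℝ (⊤ : ℕ∞) g) (P : V) :
    Eop (fun Q => f Q - g Q) P = Eop f P - Eop g P := by
  simp only [Eop]
  rw [px_sub f g hf hg P, py_sub f g hf hg P]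
  ring

lemma Eop_add (f g : V → ℝ) (hf : ContDiff ℝ (⊤ : ℕ∞) f) (hg : ContDiff ℝ (⊤ : ℕ∞) g) (P : V) :
    Eop (fun Q => f Q + g Q) P = Eop f P + Eop g P := by
  simp only [Eop]
  rw [px_add f g hf hg P, py_add f g hf hg P]
  ring

lemma J_swap (f g : V → ℝ) (P : V) : J f g P = - J g f P := by
  simp only [J]; ring
end RM


theorem rmhd_third_covering_compatibility
    (u v p q : ℝ × ℝ × ℝ × ℝ → ℝ)
    (hu : ContDiff ℝ (⊤ : ℕ∞) u) (hv : ContDiff ℝ (⊤ : ℕ∞) v)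
    (hp : ContDiff ℝ (⊤ : ℕ∞) p) (hq : ContDiff ℝ (⊤ : ℕ∞) q)
    (hpt : ∀ P, pt p P = J u p P - Eop u P)
    (hpz : ∀ P, pz p P = J v p P - Eop v P) :
    (∀ P, J (F2 u v) p P = Eop (F2 u v) P) ∧
    ((∀ P, pt q P = J u q P + J (lap v) p P - Eop (lap v) P) →
     (∀ P, pz q P = J v q P + J (lap u) p P - Eop (lap u) P) →
     ∀ P, J (F2 u v) q P + J (F1 u v) p P = Eop (F1 u v) P) := by
  have hp' : pt p = fun Q => J u p Q - Eop u Q := funext hpt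
  have hpz' : pz p = fun Q => J v p Q - Eop v Q := funext hpz
  have hJup : ContDiff ℝ (⊤ : ℕ∞) (J u p) := RM.contDiff_J u p hu hp
  have hJvp : ContDiff ℝ (⊤ : ℕ∞) (J v p) := RM.contDiff_J v p hv hp
  have hEu : ContDiff ℝ (⊤ : ℕ∞) (Eop u) := RM.contDiff_Eop u hu
  have hEv : ContDiff ℝ (⊤ : ℕ∞) (Eop v) := RM.contDiff_Eop v hv
  have e2 : F2 u v = fun Q => pt v Q - pz u Q - J u v Q := rfl
  constructor
  · intro P
    have h1 : pz (pt p) P = J (pz u) p P + J u (pz p) P - Eop (pz u) P := by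
      rw [hp', RM.pz_sub (J u p) (Eop u) hJup hEu P, RM.pz_J u p hu hp P, RM.pz_Eop u hu P]
    have h2 : J u (pz p) P = J u (J v p) P - J u (Eop v) P := by
      rw [hpz']; exact RM.J_sub_right u (J v p) (Eop v) hJvp hEv P
    have h3 : pt (pz p) P = J (pt v) p P + J v (pt p) P - Eop (pt v) P := by
      rw [hpz', RM.pt_sub (J v p) (Eop v) hJvp hEv P, RM.pt_J v p hv hp P, RM.pt_Eop v hv P]
    have h4 : J v (pt p) P = J v (J u p) P - J v (Eop u) P := by
      rw [hp']; exact RM.J_sub_right v (J u p) (Eop u) hJup hEu P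
    have hkey : pz (pt p) P = pt (pz p) P := (RM.ptz_comm p hp P).symm
    have jac : J u (J v p) P - J v (J u p) P = J (J u v) p P := RM.J_J u v p hu hv hp P
    have sw : J v (Eop u) P = - J (Eop u) v P := RM.J_swap v (Eop u) P
    have g1 : J (F2 u v) p P = J (pt v) p P - J (pz u) p P - J (J u v) p P := by
      rw [e2, RM.J_sub_left (fun Q => pt v Q - pz u Q) (J u v) p
          ((RM.contDiff_pt v hv).sub (RM.contDiff_pz u hu)) (RM.contDiff_J u v hu hv) P,
        RM.J_sub_left (pt v) (pz u) p (RM.contDiff_pt v hv) (RM.contDiff_pz u hu) P]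
    have g2 : Eop (F2 u v) P = Eop (pt v) P - Eop (pz u) P - Eop (J u v) P := by
      rw [e2, RM.Eop_sub (fun Q => pt v Q - pz u Q) (J u v)
          ((RM.contDiff_pt v hv).sub (RM.contDiff_pz u hu)) (RM.contDiff_J u v hu hv) P,
        RM.Eop_sub (pt v) (pz u) (RM.contDiff_pt v hv) (RM.contDiff_pz u hu) P]
    have g3 : Eop (J u v) P = J (Eop u) v P + J u (Eop v) P := RM.Eop_J u v hu hv P
    linarith
  · intro hqt hqz P
    have hq' : pt q = fun Q => J u q Q + J (lap v) p Q - Eop (lap v) Q := funext hqt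
    have hqz' : pz q = fun Q => J v q Q + J (lap u) p Q - Eop (lap u) Q := funext hqz
    have hLu : ContDiff ℝ (⊤ : ℕ∞) (lap u) := RM.contDiff_lap u hu
    have hLv : ContDiff ℝ (⊤ : ℕ∞) (lap v) := RM.contDiff_lap v hv
    have hJuq : ContDiff ℝ (⊤ : ℕ∞) (J u q) := RM.contDiff_J u q hu hq
    have hJvq : ContDiff ℝ (⊤ : ℕ∞) (J v q) := RM.contDiff_J v q hv hq
    have hJLvp : ContDiff ℝ (⊤ : ℕ∞) (J (lap v) p) := RM.contDiff_J (lap v) p hLv hp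
    have hJLup : ContDiff ℝ (⊤ : ℕ∞) (J (lap u) p) := RM.contDiff_J (lap u) p hLu hp
    have hELv : ContDiff ℝ (⊤ : ℕ∞) (Eop (lap v)) := RM.contDiff_Eop (lap v) hLv
    have hELu : ContDiff ℝ (⊤ : ℕ∞) (Eop (lap u)) := RM.contDiff_Eop (lap u) hLu
    have hJuLu : ContDiff ℝ (⊤ : ℕ∞) (J u (lap u)) := RM.contDiff_J u (lap u) hu hLu
    have hJvLv : ContDiff ℝ (⊤ : ℕ∞) (J v (lap v)) := RM.contDiff_J v (lap v) hv hLv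
    have k1 : pz (pt q) P = J (pz u) q P + J u (pz q) P
        + (J (pz (lap v)) p P + J (lap v) (pz p) P) - Eop (pz (lap v)) P := by
      rw [hq', RM.pz_sub (fun Q => J u q Q + J (lap v) p Q) (Eop (lap v)) (hJuq.add hJLvp) hELv P,
        RM.pz_add (J u q) (J (lap v) p) hJuq hJLvp P,
        RM.pz_J u q hu hq P, RM.pz_J (lap v) p hLv hp P, RM.pz_Eop (lap v) hLv P]
    have k2 : J u (pz q) P = J u (J v q) P + J u (J (lap u) p) P - J u (Eop (lap u)) P := by
      rw [hqz', RM.J_sub_right u (fun Q => J v q Q + J (lap u) p Q) (Eop (lap u))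
          (hJvq.add hJLup) hELu P,
        RM.J_add_right u (J v q) (J (lap u) p) hJvq hJLup P]
    have k3 : J (lap v) (pz p) P = J (lap v) (J v p) P - J (lap v) (Eop v) P := by
      rw [hpz']; exact RM.J_sub_right (lap v) (J v p) (Eop v) hJvp hEv P
    have k4 : pt (pz q) P = J (pt v) q P + J v (pt q) P
        + (J (pt (lap u)) p P + J (lap u) (pt p) P) - Eop (pt (lap u)) P := by
      rw [hqz', RM.pt_sub (fun Q => J v q Q + J (lap u) p Q) (Eop (lap u)) (hJvq.add hJLup) hELu P,
        RM.pt_add (J v q) (J (lap u) p) hJvq hJLup P,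
        RM.pt_J v q hv hq P, RM.pt_J (lap u) p hLu hp P, RM.pt_Eop (lap u) hLu P]
    have k5 : J v (pt q) P = J v (J u q) P + J v (J (lap v) p) P - J v (Eop (lap v)) P := by
      rw [hq', RM.J_sub_right v (fun Q => J u q Q + J (lap v) p Q) (Eop (lap v))
          (hJuq.add hJLvp) hELv P,
        RM.J_add_right v (J u q) (J (lap v) p) hJuq hJLvp P]
    have k6 : J (lap u) (pt p) P = J (lap u) (J u p) P - J (lap u) (Eop u) P := by
      rw [hp']; exact RM.J_sub_right (lap u) (J u p) (Eop u) hJup hEu P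
    have hkey2 : pz (pt q) P = pt (pz q) P := (RM.ptz_comm q hq P).symm
    have jac1 : J u (J v q) P - J v (J u q) P = J (J u v) q P := RM.J_J u v q hu hv hq P
    have jac2 : J u (J (lap u) p) P - J (lap u) (J u p) P = J (J u (lap u)) p P :=
      RM.J_J u (lap u) p hu hLu hp P
    have jac3 : J v (J (lap v) p) P - J (lap v) (J v p) P = J (J v (lap v)) p P :=
      RM.J_J v (lap v) p hv hLv hp P
    have sw1 : J (lap u) (Eop u) P = - J (Eop u) (lap u) P := RM.J_swap (lap u) (Eop u) P
    have sw2 : J (lap v) (Eop v) P = - J (Eop v) (lap v) P := RM.J_swap (lap v) (Eop v) P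
    have e1 : F1 u v = fun Q => pt (lap u) Q - pz (lap v) Q - J u (lap u) Q + J v (lap v) Q := rfl
    have hB2 : ContDiff ℝ (⊤ : ℕ∞) (fun Q => pt (lap u) Q - pz (lap v) Q) :=
      (RM.contDiff_pt (lap u) hLu).sub (RM.contDiff_pz (lap v) hLv)
    have hB1 : ContDiff ℝ (⊤ : ℕ∞) (fun Q => pt (lap u) Q - pz (lap v) Q - J u (lap u) Q) :=
      hB2.sub hJuLu
    have gA : J (F2 u v) q P = J (pt v) q P - J (pz u) q P - J (J u v) q P := by
      rw [e2, RM.J_sub_left (fun Q => pt v Q - pz u Q) (J u v) q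
          ((RM.contDiff_pt v hv).sub (RM.contDiff_pz u hu)) (RM.contDiff_J u v hu hv) P,
        RM.J_sub_left (pt v) (pz u) q (RM.contDiff_pt v hv) (RM.contDiff_pz u hu) P]
    have gB : J (F1 u v) p P = J (pt (lap u)) p P - J (pz (lap v)) p P
        - J (J u (lap u)) p P + J (J v (lap v)) p P := by
      rw [e1, RM.J_add_left (fun Q => pt (lap u) Q - pz (lap v) Q - J u (lap u) Q)
          (J v (lap v)) p hB1 hJvLv P,
        RM.J_sub_left (fun Q => pt (lap u) Q - pz (lap v) Q) (J u (lap u)) p hB2 hJuLu P,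
        RM.J_sub_left (pt (lap u)) (pz (lap v)) p (RM.contDiff_pt (lap u) hLu)
          (RM.contDiff_pz (lap v) hLv) P]
    have gC : Eop (F1 u v) P = Eop (pt (lap u)) P - Eop (pz (lap v)) P
        - Eop (J u (lap u)) P + Eop (J v (lap v)) P := by
      rw [e1, RM.Eop_add (fun Q => pt (lap u) Q - pz (lap v) Q - J u (lap u) Q)
          (J v (lap v)) hB1 hJvLv P,
        RM.Eop_sub (fun Q => pt (lap u) Q - pz (lap v) Q) (J u (lap u)) hB2 hJuLu P,
        RM.Eop_sub (pt (lap u)) (pz (lap v)) (RM.contDiff_pt (lap u) hLu)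
          (RM.contDiff_pz (lap v) hLv) P]
    have gD : Eop (J u (lap u)) P = J (Eop u) (lap u) P + J u (Eop (lap u)) P :=
      RM.Eop_J u (lap u) hu hLu P
    have gE : Eop (J v (lap v)) P = J (Eop v) (lap v) P + J v (Eop (lap v)) P :=
      RM.Eop_J v (lap v) hv hLv P
    linarith
end
end

section
/- Let u, v, p : ℝ³ → ℝ be smooth functions of (t, x, y) satisfying p_t = J(u, p) and J(v, p) = 0 at every point. Then J(G2, p) = 0 at every point, where G2 := v_t − J(u, v). -/
noncomputable section

/-- Partial derivative in `t` of a function of `(t, x, y)`. -/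
def pt3 (f : ℝ × ℝ × ℝ → ℝ) (P : ℝ × ℝ × ℝ) : ℝ :=
  deriv (fun w => f (w, P.2.1, P.2.2)) P.1

/-- Partial derivative in `x` of a function of `(t, x, y)`. -/
def px3 (f : ℝ × ℝ × ℝ → ℝ) (P : ℝ × ℝ × ℝ) : ℝ :=
  deriv (fun w => f (P.1, w, P.2.2)) P.2.1

/-- Partial derivative in `y` of a function of `(t, x, y)`. -/
def py3 (f : ℝ × ℝ × ℝ → ℝ) (P : ℝ × ℝ × ℝ) : ℝ :=
  deriv (fun w => f (P.1, P.2.1, w)) P.2.2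

/-- Jacobi bracket `J(f, g) = f_x g_y - f_y g_x`. -/
def J3 (f g : ℝ × ℝ × ℝ → ℝ) : ℝ × ℝ × ℝ → ℝ :=
  fun P => px3 f P * py3 g P - py3 f P * px3 g P

/-- Planar Laplacian `Δf = f_xx + f_yy`. -/
def lap3 (f : ℝ × ℝ × ℝ → ℝ) : ℝ × ℝ × ℝ → ℝ :=
  fun P => px3 (px3 f) P + py3 (py3 f) P

/-- The operator `E(f) = x f_x + y f_y - 2 f`. -/
def Eop3 (f : ℝ × ℝ × ℝ → ℝ) : ℝ × ℝ × ℝ → ℝ :=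
  fun P => P.2.1 * px3 f P + P.2.2 * py3 f P - 2 * f P

/-- `G1 = (Δu)_t - J(u, Δu) + J(v, Δv)`. -/
def G1 (u v : ℝ × ℝ × ℝ → ℝ) : ℝ × ℝ × ℝ → ℝ :=
  fun P => pt3 (lap3 u) P - J3 u (lap3 u) P + J3 v (lap3 v) P

/-- `G2 = v_t - J(u, v)`. -/
def G2 (u v : ℝ × ℝ × ℝ → ℝ) : ℝ × ℝ × ℝ → ℝ :=
  fun P => pt3 v P - J3 u v P

abbrev V3 := ℝ × ℝ × ℝ

def pd (e : V3) (f : V3 → ℝ) (P : V3) : ℝ := fderiv ℝ f P e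

lemma contDiff_pd (e : V3) (f : V3 → ℝ) (hf : ContDiff ℝ (⊤ : ℕ∞) f) :
    ContDiff ℝ (⊤ : ℕ∞) (pd e f) :=
  (hf.fderiv_right (by simp)).clm_apply contDiff_const

lemma diff_pd (e : V3) (f : V3 → ℝ) (hf : ContDiff ℝ (⊤ : ℕ∞) f) :
    Differentiable ℝ (pd e f) :=
  (contDiff_pd e f hf).differentiable (by simp)

lemma pd_sub (e : V3) (f g : V3 → ℝ) (hf : Differentiable ℝ f)
    (hg : Differentiable ℝ g) (P : V3) :
    pd e (fun Q => f Q - g Q) P = pd e f P - pd e g P := by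
  unfold pd
  rw [fderiv_fun_sub (hf P) (hg P)]
  rfl

lemma pd_mul (e : V3) (f g : V3 → ℝ) (hf : Differentiable ℝ f)
    (hg : Differentiable ℝ g) (P : V3) :
    pd e (fun Q => f Q * g Q) P = pd e f P * g P + f P * pd e g P := by
  unfold pd
  rw [fderiv_fun_mul (hf P) (hg P)]
  simp [mul_comm]
  ring

lemma pd_comm (f : V3 → ℝ) (hf : ContDiff ℝ (⊤ : ℕ∞) f) (a b : V3) (P : V3) :
    pd a (pd b f) P = pd b (pd a f) P := by
  have hf1 : ∀ y, HasFDerivAt f (fderiv ℝ f y) y := fun y =>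
    ((hf.differentiable (by simp)) y).hasFDerivAt
  have hf' : Differentiable ℝ (fderiv ℝ f) :=
    (hf.fderiv_right (m := (⊤ : ℕ∞)) (by simp)).differentiable (by simp)
  have hx : HasFDerivAt (fderiv ℝ f) (fderiv ℝ (fderiv ℝ f) P) P :=
    (hf' P).hasFDerivAt
  have key : ∀ c d : V3, pd c (pd d f) P = fderiv ℝ (fderiv ℝ f) P c d := by
    intro c d
    have h : HasFDerivAt (fun Q => fderiv ℝ f Q d)
        ((ContinuousLinearMap.apply ℝ ℝ d).comp (fderiv ℝ (fderiv ℝ f) P)) P :=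
      (ContinuousLinearMap.apply ℝ ℝ d).hasFDerivAt.comp P hx
    show fderiv ℝ (fun Q => fderiv ℝ f Q d) P c = _
    rw [h.fderiv]
    rfl
  rw [key, key, second_derivative_symmetric hf1 hx b a]

def et3 : V3 := (1,0,0)
def ex3 : V3 := (0,1,0)
def ey3 : V3 := (0,0,1)

lemma pt3_eq (f : V3 → ℝ) (hf : Differentiable ℝ f) : pt3 f = pd et3 f := by
  funext P
  have h1 : HasDerivAt (fun w : ℝ => ((w, P.2.1, P.2.2) : V3)) ((1:ℝ),(0:ℝ),(0:ℝ)) P.1 :=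
    (hasDerivAt_id _).prodMk ((hasDerivAt_const _ _).prodMk (hasDerivAt_const _ _))
  exact ((hf P).hasFDerivAt.comp_hasDerivAt P.1 h1).deriv

lemma px3_eq (f : V3 → ℝ) (hf : Differentiable ℝ f) : px3 f = pd ex3 f := by
  funext P
  have h1 : HasDerivAt (fun w : ℝ => ((P.1, w, P.2.2) : V3)) ((0:ℝ),(1:ℝ),(0:ℝ)) P.2.1 :=
    (hasDerivAt_const _ _).prodMk ((hasDerivAt_id _).prodMk (hasDerivAt_const _ _))
  exact ((hf P).hasFDerivAt.comp_hasDerivAt P.2.1 h1).deriv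

lemma py3_eq (f : V3 → ℝ) (hf : Differentiable ℝ f) : py3 f = pd ey3 f := by
  funext P
  have h1 : HasDerivAt (fun w : ℝ => ((P.1, P.2.1, w) : V3)) ((0:ℝ),(0:ℝ),(1:ℝ)) P.2.2 :=
    (hasDerivAt_const _ _).prodMk ((hasDerivAt_const _ _).prodMk (hasDerivAt_id _))
  exact ((hf P).hasFDerivAt.comp_hasDerivAt P.2.2 h1).deriv

lemma pd_J (e : V3) (f g : V3 → ℝ) (hf : ContDiff ℝ (⊤ : ℕ∞) f) (hg : ContDiff ℝ (⊤ : ℕ∞) g) (P : V3) :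
    pd e (fun Q => pd ex3 f Q * pd ey3 g Q - pd ey3 f Q * pd ex3 g Q) P
      = (pd e (pd ex3 f) P * pd ey3 g P + pd ex3 f P * pd e (pd ey3 g) P)
        - (pd e (pd ey3 f) P * pd ex3 g P + pd ey3 f P * pd e (pd ex3 g) P) := by
  have h1 := pd_sub e (fun Q => pd ex3 f Q * pd ey3 g Q) (fun Q => pd ey3 f Q * pd ex3 g Q)
    ((diff_pd _ _ hf).mul (diff_pd _ _ hg)) ((diff_pd _ _ hf).mul (diff_pd _ _ hg)) P
  have h2 := pd_mul e (pd ex3 f) (pd ey3 g) (diff_pd _ _ hf) (diff_pd _ _ hg) P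
  have h3 := pd_mul e (pd ey3 f) (pd ex3 g) (diff_pd _ _ hf) (diff_pd _ _ hg) P
  rw [h1, h2, h3]

theorem imhd_p_covering_compatibility
    (u v p : ℝ × ℝ × ℝ → ℝ)
    (hu : ContDiff ℝ (⊤ : ℕ∞) u) (hv : ContDiff ℝ (⊤ : ℕ∞) v) (hp : ContDiff ℝ (⊤ : ℕ∞) p)
    (hpt : ∀ P, pt3 p P = J3 u p P)
    (hpz : ∀ P, J3 v p P = 0) :
    ∀ P, J3 (G2 u v) p P = 0 := by
  intro P
  have hdu := hu.differentiable (by simp)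
  have hdv := hv.differentiable (by simp)
  have hdp := hp.differentiable (by simp)
  -- G2 as a pd-expression
  have hG2 : G2 u v = fun Q => pd et3 v Q -
      (pd ex3 u Q * pd ey3 v Q - pd ey3 u Q * pd ex3 v Q) := by
    funext Q
    simp only [G2, J3, pt3_eq v hdv, px3_eq u hdu, py3_eq u hdu, px3_eq v hdv, py3_eq v hdv]
  have hG2c : ContDiff ℝ (⊤ : ℕ∞) (G2 u v) := by
    rw [hG2]
    exact (contDiff_pd et3 v hv).sub
      (((contDiff_pd ex3 u hu).mul (contDiff_pd ey3 v hv)).sub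
        ((contDiff_pd ey3 u hu).mul (contDiff_pd ex3 v hv)))
  have hG2d := hG2c.differentiable (by simp)
  -- hypothesis functions vanish identically
  have hz : (fun Q => pd ex3 v Q * pd ey3 p Q - pd ey3 v Q * pd ex3 p Q) = fun _ : V3 => (0:ℝ) := by
    funext Q
    have h := hpz Q
    simp only [J3, px3_eq v hdv, py3_eq v hdv, px3_eq p hdp, py3_eq p hdp] at h
    exact h
  have hq : (fun Q => pd et3 p Q - (pd ex3 u Q * pd ey3 p Q - pd ey3 u Q * pd ex3 p Q))
      = fun _ : V3 => (0:ℝ) := by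
    funext Q
    have h := hpt Q
    simp only [J3, pt3_eq p hdp, px3_eq u hdu, py3_eq u hdu, px3_eq p hdp, py3_eq p hdp] at h
    rw [h]; ring
  have pd0 : ∀ e : V3, pd e (fun _ : V3 => (0:ℝ)) P = 0 := by
    intro e; simp [pd]
  -- derivatives of hypothesis hz
  have Hmk : ∀ e : V3,
      (pd e (pd ex3 v) P * pd ey3 p P + pd ex3 v P * pd e (pd ey3 p) P)
        - (pd e (pd ey3 v) P * pd ex3 p P + pd ey3 v P * pd e (pd ex3 p) P) = 0 := by
    intro e
    rw [← pd_J e v p hv hp P, hz, pd0]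
  have Hx := Hmk ex3
  have Hy := Hmk ey3
  have Ht := Hmk et3
  -- derivatives of hypothesis hq
  have Pmk : ∀ e : V3,
      pd e (pd et3 p) P - ((pd e (pd ex3 u) P * pd ey3 p P + pd ex3 u P * pd e (pd ey3 p) P)
        - (pd e (pd ey3 u) P * pd ex3 p P + pd ey3 u P * pd e (pd ex3 p) P)) = 0 := by
    intro e
    have h1 := pd_sub e (pd et3 p)
      (fun Q => pd ex3 u Q * pd ey3 p Q - pd ey3 u Q * pd ex3 p Q)
      (diff_pd _ _ hp) (((diff_pd _ _ hu).mul (diff_pd _ _ hp)).sub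
        ((diff_pd _ _ hu).mul (diff_pd _ _ hp))) P
    rw [← pd_J e u p hu hp P, ← h1, hq, pd0]
  have Px := Pmk ex3
  have Py := Pmk ey3
  -- expand the goal
  have hJ : J3 (G2 u v) p P = pd ex3 (G2 u v) P * pd ey3 p P - pd ey3 (G2 u v) P * pd ex3 p P := by
    simp only [J3, px3_eq (G2 u v) hG2d, py3_eq (G2 u v) hG2d, px3_eq p hdp, py3_eq p hdp]
  rw [hJ]
  have Gmk : ∀ e : V3, pd e (G2 u v) P =
      pd e (pd et3 v) P - ((pd e (pd ex3 u) P * pd ey3 v P + pd ex3 u P * pd e (pd ey3 v) P)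
        - (pd e (pd ey3 u) P * pd ex3 v P + pd ey3 u P * pd e (pd ex3 v) P)) := by
    intro e
    have h1 := pd_sub e (pd et3 v)
      (fun Q => pd ex3 u Q * pd ey3 v Q - pd ey3 u Q * pd ex3 v Q)
      (diff_pd _ _ hv) (((diff_pd _ _ hu).mul (diff_pd _ _ hv)).sub
        ((diff_pd _ _ hu).mul (diff_pd _ _ hv))) P
    rw [hG2, ← pd_J e u v hu hv P, ← h1]
  rw [Gmk ex3, Gmk ey3]
  -- normalize mixed second derivatives
  simp only [pd_comm u hu ey3 ex3 P, pd_comm v hv ey3 ex3 P, pd_comm p hp ey3 ex3 P,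
    pd_comm v hv et3 ex3 P, pd_comm v hv et3 ey3 P, pd_comm p hp et3 ex3 P,
    pd_comm p hp et3 ey3 P] at Hx Hy Ht Px Py ⊢
  linear_combination Ht + pd ey3 v P * Px - pd ex3 v P * Py + pd ey3 u P * Hx - pd ex3 u P * Hy
end
end
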